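/- There exist bounded linear operators A and B on the complex Hilbert space ℓ²(ℕ, ℂ) such that A and B are both normal (A*A = AA* and B*B = BB*), the ranges R(A) and R(B) are closed, but the range R(AB) of the product AB is not closed. -/

import Mathlib

/-!
Fix an orthonormal sequence `e`. Let `P` be the orthogonal projection onto the closed span of the
`e (2 * n)` and `Q` the orthogonal projection onto the closed span of the `e (2 * n) + n • e (2 * n + 1)`,
i.e. onto the graph of the unbounded operator `e (2 * n) ↦ n • e (2 * n + 1)`. Orthogonal
projections are self-adjoint with closed range. Every `e (2 * n)` lies in the range of `P ∘ Q`, but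
a vector `z` of the graph with `P z = e (2 * n)` has `⟪e (2 * n + 1), z⟫ = n`, so the preimages of
these unit vectors are unbounded. By the open mapping theorem the range of `P ∘ Q` is not closed.
-/

open Submodule

open scoped InnerProductSpace

theorem ContinuousLinearMap.exists_preimage_norm_le_of_isClosed_range {𝕜 E F : Type*}
    [NontriviallyNormedField 𝕜] [NormedAddCommGroup E] [NormedSpace 𝕜 E] [CompleteSpace E]
    [NormedAddCommGroup F] [NormedSpace 𝕜 F] [CompleteSpace F] (f : E →L[𝕜] F)
    (hf : IsClosed (Set.range f)) :
    ∃ C > 0, ∀ y ∈ Set.range f, ∃ x, f x = y ∧ ‖x‖ ≤ C * ‖y‖ := by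
  have : CompleteSpace f.range := hf.completeSpace_coe
  have hsurj : Function.Surjective f.rangeRestrict := by
    rintro ⟨_, x, rfl⟩
    exact ⟨x, rfl⟩
  obtain ⟨C, hC, hpre⟩ := f.rangeRestrict.exists_preimage_norm_le hsurj
  refine ⟨C, hC, ?_⟩
  rintro _ ⟨x, rfl⟩
  obtain ⟨x', hx', hnorm⟩ := hpre (f.rangeRestrict x)
  exact ⟨x', congrArg Subtype.val hx', hnorm⟩

section

variable {𝕜 E : Type*} [RCLike 𝕜] [NormedAddCommGroup E] [InnerProductSpace 𝕜 E]

theorem Submodule.isClosed_range_starProjection (K : Submodule 𝕜 E) [CompleteSpace K] :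
    IsClosed (Set.range K.starProjection) := by
  have h := congrArg ((↑) : Submodule 𝕜 E → Set E) K.range_starProjection
  rw [LinearMap.coe_range, ContinuousLinearMap.coe_coe] at h
  rw [h]
  exact (completeSpace_coe_iff_isComplete.1 ‹_›).isClosed

theorem Submodule.inner_eq_zero_of_mem_closure_span {s : Set E} {v x : E}
    (hs : ∀ u ∈ s, ⟪v, u⟫_𝕜 = 0) (hx : x ∈ (span 𝕜 s).topologicalClosure) : ⟪v, x⟫_𝕜 = 0 := by
  rw [← SetLike.mem_coe, topologicalClosure_coe] at hx
  exact ContinuousLinearMap.eqOn_closure_span (f := innerSL 𝕜 v) (g := 0) hs hx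

variable (𝕜) (e : ℕ → E)

def evenSpan : Submodule 𝕜 E := (span 𝕜 (Set.range fun n ↦ e (2 * n))).topologicalClosure

def graphVec (n : ℕ) : E := e (2 * n) + (n : 𝕜) • e (2 * n + 1)

def graphSpan : Submodule 𝕜 E := (span 𝕜 (Set.range (graphVec 𝕜 e))).topologicalClosure

variable {𝕜 e}

theorem even_mem_evenSpan (n : ℕ) : e (2 * n) ∈ evenSpan 𝕜 e :=
  le_topologicalClosure _ (subset_span ⟨n, rfl⟩)

theorem graphVec_mem_graphSpan (n : ℕ) : graphVec 𝕜 e n ∈ graphSpan 𝕜 e :=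
  le_topologicalClosure _ (subset_span ⟨n, rfl⟩)

theorem Orthonormal.odd_mem_orthogonal_evenSpan (he : Orthonormal 𝕜 e) (n : ℕ) :
    e (2 * n + 1) ∈ (evenSpan 𝕜 e)ᗮ := by
  refine (mem_orthogonal' _ _).2 fun u hu ↦ inner_eq_zero_of_mem_closure_span ?_ hu
  rintro _ ⟨m, rfl⟩
  exact he.inner_eq_zero (by omega)

theorem Orthonormal.inner_odd_eq_of_mem_graphSpan (he : Orthonormal 𝕜 e) {x : E}
    (hx : x ∈ graphSpan 𝕜 e) (n : ℕ) : ⟪e (2 * n + 1), x⟫_𝕜 = n * ⟪e (2 * n), x⟫_𝕜 := by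
  have key : ⟪e (2 * n + 1) - (n : 𝕜) • e (2 * n), x⟫_𝕜 = 0 := by
    refine inner_eq_zero_of_mem_closure_span ?_ hx
    rintro _ ⟨m, rfl⟩
    rw [orthonormal_iff_ite] at he
    simp only [graphVec, inner_sub_left, inner_add_right, inner_smul_left, inner_smul_right, he]
    rcases eq_or_ne m n with rfl | hmn
    · simp
    · split_ifs <;> first | omega | simp
  rwa [inner_sub_left, inner_smul_left, map_natCast, sub_eq_zero] at key

variable [CompleteSpace E]

instance : CompleteSpace (evenSpan 𝕜 e) := (isClosed_topologicalClosure _).completeSpace_coe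

instance : CompleteSpace (graphSpan 𝕜 e) := (isClosed_topologicalClosure _).completeSpace_coe

theorem Orthonormal.starProjection_evenSpan_graphVec (he : Orthonormal 𝕜 e) (n : ℕ) :
    (evenSpan 𝕜 e).starProjection (graphVec 𝕜 e n) = e (2 * n) := by
  rw [graphVec, map_add, map_smul, starProjection_eq_self_iff.2 (even_mem_evenSpan n),
    (starProjection_apply_eq_zero_iff _).2 (he.odd_mem_orthogonal_evenSpan n), smul_zero,
    add_zero]

theorem Orthonormal.not_isClosed_range_starProjection_comp (he : Orthonormal 𝕜 e) :
    ¬ IsClosed (Set.range ((evenSpan 𝕜 e).starProjection ∘L (graphSpan 𝕜 e).starProjection)) := by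
  set P := (evenSpan 𝕜 e).starProjection
  set Q := (graphSpan 𝕜 e).starProjection
  intro hclosed
  obtain ⟨C, -, hC⟩ := (P ∘L Q).exists_preimage_norm_le_of_isClosed_range hclosed
  obtain ⟨n, hn⟩ := exists_nat_gt C
  have hrange : e (2 * n) ∈ Set.range (P ∘L Q) := ⟨graphVec 𝕜 e n, by
    simp [P, Q, starProjection_eq_self_iff.2 (graphVec_mem_graphSpan n),
      he.starProjection_evenSpan_graphVec n]⟩
  obtain ⟨x, hx, hxC⟩ := hC _ hrange
  have heven : ⟪e (2 * n), Q x⟫_𝕜 = 1 := by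
    rw [← (starProjection_eq_self_iff (K := evenSpan 𝕜 e)).2 (even_mem_evenSpan n),
      inner_starProjection_left_eq_right]
    simp only [ContinuousLinearMap.comp_apply] at hx
    rw [hx, inner_self_eq_norm_sq_to_K, he.1, RCLike.ofReal_one, one_pow]
  have hodd : ⟪e (2 * n + 1), Q x⟫_𝕜 = n := by
    rw [he.inner_odd_eq_of_mem_graphSpan (starProjection_apply_mem _ x), heven, mul_one]
  have : (n : ℝ) ≤ C := calc
    (n : ℝ) = ‖⟪e (2 * n + 1), Q x⟫_𝕜‖ := by rw [hodd, RCLike.norm_natCast]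
    _ ≤ ‖e (2 * n + 1)‖ * ‖Q x‖ := norm_inner_le_norm _ _
    _ ≤ ‖x‖ := by rw [he.1, one_mul]; exact norm_starProjection_apply_le _ x
    _ ≤ C := by rwa [he.1, mul_one] at hxC
  linarith

end

theorem stmt0 :
    ∃ A B : lp (fun _ : ℕ => ℂ) 2 →L[ℂ] lp (fun _ : ℕ => ℂ) 2,
      ContinuousLinearMap.adjoint A ∘L A = A ∘L ContinuousLinearMap.adjoint A ∧
      ContinuousLinearMap.adjoint B ∘L B = B ∘L ContinuousLinearMap.adjoint B ∧
      IsClosed (Set.range A) ∧ IsClosed (Set.range B) ∧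
      ¬ IsClosed (Set.range (A ∘L B)) := by
  let b : HilbertBasis ℕ ℂ (lp (fun _ : ℕ => ℂ) 2) := default
  refine ⟨(evenSpan ℂ b).starProjection, (graphSpan ℂ b).starProjection, ?_, ?_,
    isClosed_range_starProjection _, isClosed_range_starProjection _,
    b.orthonormal.not_isClosed_range_starProjection_comp⟩
  · rw [(isSelfAdjoint_starProjection _).adjoint_eq]
  · rw [(isSelfAdjoint_starProjection _).adjoint_eq]
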